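/- A disjunction-free multiplicity schema S is satisfiable (there exists a finite tree t with t ⊨ S) if and only if no cycle is reachable from the root label in the universal dependency graph G_S^u of S. -/

import Mathlib

open scoped Classical

variable {α : Type}

/-- Unordered words: multisets of symbols, as occurrence-count functions. -/
abbrev UWord (α : Type) := α → ℕ

/-- Multiplicities `*`, `+`, `?`, `0`, `1`. -/
inductive Mult : Type where
  | zero | one | opt | plus | star
deriving DecidableEq

/-- Interpretation of multiplicities as sets of natural numbers. -/
def Mult.sem : Mult → Set ℕ
  | .zero => {0}
  | .one => {1}
  | .opt => {0, 1}
  | .plus => {n | 0 < n}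
  | .star => Set.univ

/-- A disjunction `a₁^{M₁} | … | a_k^{M_k}`. -/
abbrev Disj (α : Type) := List (α × Mult)

/-- A disjunctive multiplicity expression `D₁^{M₁} ⊎ … ⊎ D_n^{M_n}`. -/
abbrev DME (α : Type) := List (Disj α × Mult)

/-- Language of `a^M`. -/
def singleLang (a : α) (m : Mult) : Set (UWord α) :=
  {w | w a ∈ m.sem ∧ ∀ b, b ≠ a → w b = 0}

/-- Language of a disjunction. -/
def disjLang (D : Disj α) : Set (UWord α) :=
  {w | ∃ p ∈ D, w ∈ singleLang p.1 p.2}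

/-- Pointwise (multiset) sum of a list of unordered words. -/
def sumWords (ws : List (UWord α)) : UWord α := fun a => (ws.map (fun u => u a)).sum

/-- Language of `D^M`. -/
def powLang (L : Set (UWord α)) (m : Mult) : Set (UWord α) :=
  {w | ∃ ws : List (UWord α), ws.length ∈ m.sem ∧ (∀ u ∈ ws, u ∈ L) ∧ w = sumWords ws}

/-- Language of a disjunctive multiplicity expression. -/
def dmeLang (E : DME α) : Set (UWord α) :=
  {w | ∃ ws : List (UWord α),
      List.Forall₂ (fun p u => u ∈ powLang (disjLang p.1) p.2) E ws ∧ w = sumWords ws}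

/-- Symbols occurring in a disjunctive multiplicity expression. -/
def dmeSymbols (E : DME α) : List α := E.flatMap (fun p => p.1.map Prod.fst)

/-- Normalized disjunctive multiplicity expression (each symbol occurs at most once,
each disjunction nonempty, and the two normal-form conditions of the paper). -/
def Normalized (E : DME α) : Prop :=
  (dmeSymbols E).Nodup ∧
  ∀ p ∈ E, p.1 ≠ [] ∧
    (p.2 ≠ Mult.one → p.2 = Mult.plus ∧ ∀ q ∈ p.1, q.2 = Mult.one) ∧
    ((∃ q ∈ p.1, (0 : ℕ) ∈ q.2.sem) → ∀ q ∈ p.1, (0 : ℕ) ∈ q.2.sem)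

/-- Conflicting pairs of siblings `C_E`. -/
def CE (E : DME α) : Set (α × α) :=
  {p | ¬ ∃ w ∈ dmeLang E, w p.1 ≠ 0 ∧ w p.2 ≠ 0}

/-- Extended cardinality map `N_E`. -/
def NE (E : DME α) : Set (α × ℕ) :=
  {p | ∃ w ∈ dmeLang E, w p.1 = p.2}

/-- Sets of required symbols `P_E`. -/
def PE (E : DME α) : Set (Set α) :=
  {X | ∀ w ∈ dmeLang E, ∃ a ∈ X, w a ≠ 0}

/-- Consistency of an unordered word with a characterizing triple. -/
def ConsTriple (w : UWord α) (C : Set (α × α)) (N : Set (α × ℕ)) (P : Set (Set α)) : Prop :=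
  (∀ p ∈ C, ¬ (w p.1 ≠ 0 ∧ w p.2 ≠ 0)) ∧
  (∀ a, (a, w a) ∈ N) ∧
  (∀ X ∈ P, ∃ a ∈ X, w a ≠ 0)

/-- Language of a disjunction-free multiplicity expression given as a list of
symbol/multiplicity pairs. -/
def dfLang (l : List (α × Mult)) : Set (UWord α) :=
  {w | (∀ p ∈ l, w p.1 ∈ p.2.sem) ∧ ∀ b, b ∉ l.map Prod.fst → w b = 0}

/-- Finite unordered trees. -/
inductive UTree (α : Type) : Type where
  | node : α → List (UTree α) → UTree α

def UTree.lab : UTree α → α | .node a _ => a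

def UTree.children : UTree α → List (UTree α) | .node _ ts => ts

/-- Twig queries: labels in `Σ ∪ {⋆}` (wildcard = `none`); each child subquery is tagged
with `false` for a child edge and `true` for a descendant edge. -/
inductive Twig (α : Type) : Type where
  | node : Option α → List (Twig α × Bool) → Twig α

/-- Proper subtree (proper descendant) relation. -/
inductive StrictDesc : UTree α → UTree α → Prop where
  | child {s t : UTree α} : s ∈ t.children → StrictDesc s t
  | step {s u t : UTree α} : StrictDesc s u → u ∈ t.children → StrictDesc s t

/-- `Sat t q`: the twig query `q` can be embedded in the tree `t`
(root to root, child edges to child edges, descendant edges to proper descendants,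
labels preserved up to wildcard). -/
def Sat : UTree α → Twig α → Prop
  | t, .node l qs =>
      (∀ x ∈ l, x = t.lab) ∧
      ∀ p ∈ qs, (p.2 = false → ∃ t' ∈ t.children, Sat t' p.1) ∧
                (p.2 = true → ∃ t', StrictDesc t' t ∧ Sat t' p.1)
termination_by t q => sizeOf q
decreasing_by
  all_goals
    obtain ⟨q', b'⟩ := p
    have h1 : sizeOf ((q', b') : Twig α × Bool) < sizeOf qs := List.sizeOf_lt_of_mem (by assumption)
    simp at h1 ⊢
    omega

/-- `TEmb t' t` : the tree `t'` can be embedded in the tree `t` (root-, child-, and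
label-preserving). -/
def TEmb : UTree α → UTree α → Prop
  | .node a ts', t => t.lab = a ∧ ∀ s' ∈ ts', ∃ s ∈ t.children, TEmb s' s

/-- `QGEmb E a q` : the twig query `q` can be embedded in the rooted graph with edge
relation `E` at root `a`. -/
def QGEmb (E : α → α → Prop) : α → Twig α → Prop
  | a, .node l qs =>
      (∀ x ∈ l, x = a) ∧
      ∀ p ∈ qs, (p.2 = false → ∃ b, E a b ∧ QGEmb E b p.1) ∧
                (p.2 = true → ∃ b, Relation.TransGen E a b ∧ QGEmb E b p.1)
termination_by a q => sizeOf q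
decreasing_by
  all_goals
    obtain ⟨q', b'⟩ := p
    have h1 : sizeOf ((q', b') : Twig α × Bool) < sizeOf qs := List.sizeOf_lt_of_mem (by assumption)
    simp at h1 ⊢
    omega

/-- Labeled paths of a tree: sequences of labels along root-to-node paths. -/
inductive IsLabPath : UTree α → List α → Prop where
  | root {a : α} {ts : List (UTree α)} : IsLabPath (UTree.node a ts) [a]
  | cons {a : α} {ts : List (UTree α)} {s : UTree α} {p : List α} :
      s ∈ ts → IsLabPath s p → IsLabPath (UTree.node a ts) (a :: p)

/-- Paths of a rooted graph: nonempty vertex sequences starting at the root and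
following edges. -/
def IsGPath (E : α → α → Prop) (root : α) (p : List α) : Prop :=
  p ≠ [] ∧ p.head? = some root ∧ p.Chain' E

/-- The unfolding of a rooted graph, truncated at depth `n`.  For a graph with no cycle
reachable from the root, taking `n = Fintype.card α` yields the full unfolding. -/
noncomputable def unfoldG [Fintype α] (E : α → α → Prop) : ℕ → α → UTree α
  | 0, a => .node a []
  | n + 1, a => .node a (((Finset.univ.filter fun b => E a b).toList).map (unfoldG E n))

/-- Number of leaves of a tree. -/
def leafCount : UTree α → ℕ
  | .node _ ts => if ts.isEmpty then 1 else (ts.attach.map (fun s => leafCount s.1)).sum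
decreasing_by
  have h1 := List.sizeOf_lt_of_mem s.2
  simp
  omega

/-- Disjunction-free multiplicity schema: a root label together with, for each label `a`,
a disjunction-free multiplicity expression given as the multiplicity `R a b` of every
symbol `b` (`Mult.zero` meaning `b` does not occur). -/
structure MS (α : Type) where
  root : α
  R : α → α → Mult

/-- Every node's children-label multiset matches the rule for the node's label. -/
inductive LocalOK [DecidableEq α] (R : α → α → Mult) : UTree α → Prop where
  | node {a : α} {ts : List (UTree α)} :
      (∀ b, ((ts.map UTree.lab).count b) ∈ (R a b).sem) →
      (∀ s ∈ ts, LocalOK R s) →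
      LocalOK R (UTree.node a ts)

/-- A tree satisfies a disjunction-free multiplicity schema. -/
def SatS [DecidableEq α] (S : MS α) (t : UTree α) : Prop :=
  t.lab = S.root ∧ LocalOK S.R t

/-- Edges of the universal dependency graph: `b` occurs in `R a` with multiplicity `+` or `1`. -/
def uEdge (S : MS α) (a b : α) : Prop := S.R a b = Mult.plus ∨ S.R a b = Mult.one

/-- Edges of the dependency graph: `b` occurs in `R a` with multiplicity in `{*,+,?,1}`. -/
def dEdge (S : MS α) (a b : α) : Prop := S.R a b ≠ Mult.zero

/-- A simulation of the rooted graph `(α, root, E)` in the tree `t`. -/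
def IsSimulation (E : α → α → Prop) (root : α) (t : UTree α) (R : α → UTree α → Prop) : Prop :=
  R root t ∧ (∀ a s, R a s → s.lab = a) ∧
  (∀ a s, R a s → ∀ b, E a b → ∃ s' ∈ s.children, R b s')

/-- One fuse step: two sibling nodes with the same label are merged into a single node
whose children are the children of both (applied anywhere in the tree). -/
inductive Fuse : UTree α → UTree α → Prop where
  | here {a b : α} {l₁ l₂ l₃ cs₁ cs₂ : List (UTree α)} :
      Fuse (UTree.node a (l₁ ++ UTree.node b cs₁ :: l₂ ++ UTree.node b cs₂ :: l₃))
           (UTree.node a (l₁ ++ UTree.node b (cs₁ ++ cs₂) :: l₂ ++ l₃))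
  | there {a : α} {s s' : UTree α} {l₁ l₂ : List (UTree α)} :
      Fuse s s' → Fuse (UTree.node a (l₁ ++ s :: l₂)) (UTree.node a (l₁ ++ s' :: l₂))

/-- One add step: an arbitrary new subtree is attached as an additional child of some
node of the tree. -/
inductive AddOp : UTree α → UTree α → Prop where
  | here {a : α} {s : UTree α} {l : List (UTree α)} :
      AddOp (UTree.node a l) (UTree.node a (s :: l))
  | there {a : α} {s s' : UTree α} {l₁ l₂ : List (UTree α)} :
      AddOp s s' → AddOp (UTree.node a (l₁ ++ s :: l₂)) (UTree.node a (l₁ ++ s' :: l₂))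

/-! A required edge `a → b` of `G_S^u` forces every `a`-labelled node of a model to have a
`b`-labelled child, so a cycle reachable from the root would produce an infinite branch.
Conversely, if no cycle is reachable from the root, every walk from the root has fewer than
`|Σ|` edges, and the unfolding of `G_S^u` from the root, which gives each `a`-labelled node
exactly one `b`-labelled child per required edge `a → b`, is a finite model of `S`. -/

theorem Mult.one_mem_sem_of_zero_notMem {m : Mult} (h : 0 ∉ m.sem) : 1 ∈ m.sem := by
  cases m <;> simp_all [sem]

theorem uEdge_iff_zero_notMem_sem {α : Type} {S : MS α} {a b : α} :
    uEdge S a b ↔ 0 ∉ (S.R a b).sem := by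
  cases h : S.R a b <;> simp [uEdge, h, Mult.sem]

theorem UTree.sizeOf_lt_of_mem_children {α : Type} {s t : UTree α} (hs : s ∈ t.children) :
    sizeOf s < sizeOf t := by
  obtain ⟨a, ts⟩ := t
  have := List.sizeOf_lt_of_mem (show s ∈ ts from hs)
  simp only [UTree.node.sizeOf_spec]
  omega

section Model

variable {α : Type} [DecidableEq α] {S : MS α}

theorem LocalOK.exists_child_of_uEdge {t : UTree α} (ht : LocalOK S.R t) {b : α}
    (hb : uEdge S t.lab b) : ∃ s ∈ t.children, s.lab = b ∧ LocalOK S.R s := by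
  obtain ⟨hcount, hchildren⟩ := ht
  have hpos : (List.map UTree.lab _).count b ≠ 0 := fun h0 =>
    uEdge_iff_zero_notMem_sem.mp hb (h0 ▸ hcount b)
  obtain ⟨s, hs, rfl⟩ := List.mem_map.mp (List.count_pos_iff.mp (Nat.pos_of_ne_zero hpos))
  exact ⟨s, hs, rfl, hchildren s hs⟩

theorem LocalOK.exists_smaller_of_transGen {t : UTree α} (ht : LocalOK S.R t) {b : α}
    (hb : Relation.TransGen (uEdge S) t.lab b) :
    ∃ u, u.lab = b ∧ LocalOK S.R u ∧ sizeOf u < sizeOf t := by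
  induction hb with
  | single e =>
    obtain ⟨s, hs, rfl, hsOK⟩ := ht.exists_child_of_uEdge e
    exact ⟨s, rfl, hsOK, UTree.sizeOf_lt_of_mem_children hs⟩
  | tail _ e ih =>
    obtain ⟨u, rfl, huOK, hut⟩ := ih
    obtain ⟨s, hs, rfl, hsOK⟩ := huOK.exists_child_of_uEdge e
    exact ⟨s, rfl, hsOK, (UTree.sizeOf_lt_of_mem_children hs).trans hut⟩

theorem LocalOK.not_transGen_lab_self {t : UTree α} (ht : LocalOK S.R t) :
    ¬ Relation.TransGen (uEdge S) t.lab t.lab := fun hcycle =>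
  let ⟨u, hu, huOK, _⟩ := ht.exists_smaller_of_transGen hcycle
  huOK.not_transGen_lab_self (hu ▸ hcycle)
termination_by sizeOf t

end Model

section Unfolding

variable {α : Type} [Fintype α]

theorem length_lt_card_of_isChain {E : α → α → Prop} {a : α}
    (hacyclic : ¬ ∃ c, Relation.ReflTransGen E a c ∧ Relation.TransGen E c c) {l : List α}
    (hl : List.IsChain E (a :: l)) : l.length < Fintype.card α := by
  by_contra hlen
  have hdup : ¬ (a :: l).Nodup := fun hnodup => by
    have := hnodup.length_le_card
    simp only [List.length_cons] at this
    omega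
  obtain ⟨c, hcc⟩ : ∃ c, [c, c].Sublist (a :: l) := by
    simpa [List.nodup_iff_sublist] using hdup
  have hpw : (a :: l).Pairwise (Relation.TransGen E) :=
    (hl.imp fun _ _ => Relation.TransGen.single).pairwise
  refine hacyclic ⟨c, ?_, by simpa using hpw.sublist hcc⟩
  rcases List.mem_cons.mp (hcc.subset (List.mem_cons_self (l := [c]))) with rfl | hc
  · exact .refl
  · exact ((List.pairwise_cons.mp hpw).1 c hc).to_reflTransGen

theorem lab_unfoldG (E : α → α → Prop) (n : ℕ) (a : α) : (unfoldG E n a).lab = a := by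
  cases n <;> rfl

theorem localOK_unfoldG [DecidableEq α] {S : MS α} (n : ℕ) (a : α)
    (h : ∀ l, List.IsChain (uEdge S) (a :: l) → l.length < n) :
    LocalOK S.R (unfoldG (uEdge S) n a) := by
  induction n generalizing a with
  | zero => exact absurd (h [] (List.isChain_singleton a)) (Nat.lt_irrefl 0)
  | succ n ih =>
    rw [unfoldG]
    refine LocalOK.node (fun b => ?_) (fun s hs => ?_)
    · simp only [List.map_map, Function.comp_def, lab_unfoldG, List.map_id']
      by_cases hb : uEdge S a b
      · rw [List.count_eq_one_of_mem (Finset.nodup_toList _) (by simpa using hb)]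
        exact Mult.one_mem_sem_of_zero_notMem (uEdge_iff_zero_notMem_sem.mp hb)
      · rw [List.count_eq_zero_of_not_mem (by simpa using hb)]
        exact not_not.mp (mt uEdge_iff_zero_notMem_sem.mpr hb)
    · obtain ⟨b, hb, rfl⟩ := List.mem_map.mp hs
      refine ih b fun l hl => ?_
      have := h (b :: l) (List.isChain_cons_cons.mpr ⟨by simpa using hb, hl⟩)
      simp only [List.length_cons] at this
      omega

end Unfolding

/-- a disjunction-free multiplicity schema is satisfiable iff no cycle is
reachable from the root label in its universal dependency graph. -/
theorem ms_satisfiable_iff_no_cycle_reachable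
    {α : Type} [Fintype α] [DecidableEq α] (S : MS α) :
    (∃ t : UTree α, SatS S t) ↔
      ¬ ∃ a : α, Relation.ReflTransGen (uEdge S) S.root a ∧
        Relation.TransGen (uEdge S) a a := by
  constructor
  · rintro ⟨t, hroot, ht⟩ ⟨a, hreach, hcycle⟩
    obtain ⟨u, rfl, hu, -⟩ :=
      ht.exists_smaller_of_transGen (Relation.TransGen.trans_right (hroot ▸ hreach) hcycle)
    exact hu.not_transGen_lab_self hcycle
  · intro hacyclic
    exact ⟨unfoldG (uEdge S) (Fintype.card α) S.root, lab_unfoldG _ _ _,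
      localOK_unfoldG _ _ fun _ hl => length_lt_card_of_isChain hacyclic hl⟩
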